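/- arXiv:1811.02876 — 4 statements merged into one kernel-verified Lean document; each statement's English description precedes it below -/
import Mathlib

section
/- The submodule ℤh² + Γ of Γ̄ has index 3; that is, the quotient group Γ̄/(ℤh² + (h²)^⊥) is cyclic of order 3. -/
open scoped BigOperators

noncomputable section

/-- The negative definite `E₈` Gram matrix. -/
def E8M : Matrix (Fin 8) (Fin 8) ℤ := - CartanMatrix.E₈

/-- The Gram matrix of the cubic lattice `Γ̄ = E₈(-1)² ⊕ U² ⊕ I₀,₃` on `ℤ²³`. -/
def gramC : Fin 23 → Fin 23 → ℤ := fun i j =>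
  if i.val < 8 ∧ j.val < 8 then
    E8M ⟨i.val % 8, Nat.mod_lt _ (by norm_num)⟩ ⟨j.val % 8, Nat.mod_lt _ (by norm_num)⟩
  else if 8 ≤ i.val ∧ i.val < 16 ∧ 8 ≤ j.val ∧ j.val < 16 then
    E8M ⟨(i.val - 8) % 8, Nat.mod_lt _ (by norm_num)⟩ ⟨(j.val - 8) % 8, Nat.mod_lt _ (by norm_num)⟩
  else if (i.val = 16 ∧ j.val = 17) ∨ (i.val = 17 ∧ j.val = 16) ∨
      (i.val = 18 ∧ j.val = 19) ∨ (i.val = 19 ∧ j.val = 18) then 1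
  else if 20 ≤ i.val ∧ i = j then -1
  else 0

/-- The bilinear form of the cubic lattice `Γ̄`. -/
def GB (x y : Fin 23 → ℤ) : ℤ := ∑ i, ∑ j, gramC i j * x i * y j

/-- The class `h² = (0,…,0,1,1,1)`. -/
def h2 : Fin 23 → ℤ := Pi.single 20 1 + Pi.single 21 1 + Pi.single 22 1

/-- A vector is primitive if it is not `m • w` with `|m| ≥ 2`. -/
def PrimitiveC (v : Fin 23 → ℤ) : Prop :=
  ¬ ∃ (m : ℤ) (w : Fin 23 → ℤ), 2 ≤ |m| ∧ v = m • w

/-- Membership in `Γ = (h²)^⊥ ⊂ Γ̄`. -/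
def inGamma (x : Fin 23 → ℤ) : Prop := GB h2 x = 0

lemma GB_add_right (x y z : Fin 23 → ℤ) : GB x (y + z) = GB x y + GB x z := by
  simp [GB, Pi.add_apply, mul_add, Finset.sum_add_distrib]

lemma GB_smul_right (c : ℤ) (x y : Fin 23 → ℤ) : GB x (c • y) = c * GB x y := by
  simp only [GB, Finset.mul_sum]
  refine Finset.sum_congr rfl fun i _ => Finset.sum_congr rfl fun j _ => ?_
  simp only [Pi.smul_apply, smul_eq_mul]; ring

/-- `Γ = (h²)^⊥` as a submodule of `ℤ²³`. -/
def Gamma : Submodule ℤ (Fin 23 → ℤ) where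
  carrier := {x | GB h2 x = 0}
  add_mem' := by
    intro a b ha hb
    simp only [Set.mem_setOf_eq] at *
    rw [GB_add_right, ha, hb, add_zero]
  zero_mem' := by simp [GB]
  smul_mem' := by
    intro c x hx
    simp only [Set.mem_setOf_eq] at *
    rw [GB_smul_right, hx, mul_zero]

/-- The saturation of a submodule. -/
def sat {R M : Type*} [CommRing R] [IsDomain R] [AddCommGroup M] [Module R M] (N : Submodule R M) :
    Submodule R M where
  carrier := {x | ∃ n : R, n ≠ 0 ∧ n • x ∈ N}
  add_mem' := by
    rintro x y ⟨n, hn, hx⟩ ⟨m, hm, hy⟩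
    refine ⟨n * m, mul_ne_zero hn hm, ?_⟩
    have h1 : (n * m) • (x + y) = m • (n • x) + n • (m • y) := by
      rw [smul_add, mul_comm n m, mul_smul, mul_smul, smul_comm m n y]
    rw [h1]
    exact N.add_mem (N.smul_mem m hx) (N.smul_mem n hy)
  zero_mem' := ⟨1, one_ne_zero, by simp⟩
  smul_mem' := by
    rintro c x ⟨n, hn, hx⟩
    exact ⟨n, hn, by rw [smul_comm]; exact N.smul_mem c hx⟩

/-- The saturation `K_v` of `ℤh² + ℤv` in `Γ̄`. -/
def Kv (v : Fin 23 → ℤ) : Submodule ℤ (Fin 23 → ℤ) :=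
  sat (Submodule.span ℤ ({h2, v} : Set (Fin 23 → ℤ)))

/-- `d` is the discriminant of `K_v`: some ℤ-basis of `K_v` has Gram determinant `d`. -/
def discIs (v : Fin 23 → ℤ) (d : ℤ) : Prop :=
  ∃ x y : Fin 23 → ℤ, Kv v = Submodule.span ℤ ({x, y} : Set (Fin 23 → ℤ)) ∧
    d = GB x x * GB y y - GB x y * GB y x

/-- The index of `ℤh² + ℤv` in its saturation `K_v`. -/
def idx (v : Fin 23 → ℤ) : ℕ :=
  (Submodule.span ℤ ({h2, v} : Set (Fin 23 → ℤ))).toAddSubgroup.relIndex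
    (Kv v).toAddSubgroup

/-- Isometries of the cubic lattice `Γ̄`. -/
def IsIsomC (g : (Fin 23 → ℤ) ≃ₗ[ℤ] (Fin 23 → ℤ)) : Prop := ∀ x y, GB (g x) (g y) = GB x y

end

/-!
Pairing with `h²` is a surjective functional `φ : Γ̄ → ℤ` (it is minus the sum of the last three
coordinates) with kernel `Γ`. Hence `ℤh² + Γ = φ⁻¹(ℤ φ(h²)) = φ⁻¹(3ℤ)`, which has index `3`.
-/

theorem Submodule.index_span_singleton_sup_ker {M : Type*} [AddCommGroup M] [Module ℤ M]
    {φ : M →ₗ[ℤ] ℤ} (hφ : Function.Surjective φ) (h : M) :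
    (Submodule.span ℤ {h} ⊔ LinearMap.ker φ).toAddSubgroup.index = (φ h).natAbs := by
  rw [← Submodule.comap_map_eq, Submodule.map_span, Set.image_singleton]
  change (AddSubgroup.comap φ.toAddMonoidHom (Submodule.span ℤ {φ h}).toAddSubgroup).index = _
  rw [AddSubgroup.index_comap_of_surjective _ hφ,
    Submodule.span_singleton_toAddSubgroup_eq_zmultiples, Int.index_zmultiples]

lemma GB_add_left (x y z : Fin 23 → ℤ) : GB (x + y) z = GB x z + GB y z := by
  simp only [GB, Pi.add_apply, ← Finset.sum_add_distrib]
  refine Finset.sum_congr rfl fun i _ => Finset.sum_congr rfl fun j _ => ?_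
  ring

lemma GB_single_one_left (a : Fin 23) (x : Fin 23 → ℤ) :
    GB (Pi.single a 1) x = ∑ j, gramC a j * x j := by
  rw [GB, Finset.sum_eq_single a (fun b _ hb => by simp [Pi.single_eq_of_ne hb]) (by simp)]
  simp

lemma gramC_of_twenty_le {a : Fin 23} (ha : 20 ≤ a.val) (j : Fin 23) :
    gramC a j = if a = j then -1 else 0 := by
  have h₁ : ¬ (a.val < 8 ∧ j.val < 8) := by omega
  have h₂ : ¬ (8 ≤ a.val ∧ a.val < 16 ∧ 8 ≤ j.val ∧ j.val < 16) := by omega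
  have h₃ : ¬ ((a.val = 16 ∧ j.val = 17) ∨ (a.val = 17 ∧ j.val = 16) ∨
      (a.val = 18 ∧ j.val = 19) ∨ (a.val = 19 ∧ j.val = 18)) := by omega
  simp [gramC, h₁, h₂, h₃, ha]

lemma GB_single_one_left_of_twenty_le {a : Fin 23} (ha : 20 ≤ a.val) (x : Fin 23 → ℤ) :
    GB (Pi.single a 1) x = -x a := by
  simp [GB_single_one_left, gramC_of_twenty_le ha]

lemma GB_h2_left (x : Fin 23 → ℤ) : GB h2 x = -(x 20 + x 21 + x 22) := by
  rw [h2, GB_add_left, GB_add_left, GB_single_one_left_of_twenty_le (by decide),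
    GB_single_one_left_of_twenty_le (by decide), GB_single_one_left_of_twenty_le (by decide)]
  ring

def pairingH2 : (Fin 23 → ℤ) →ₗ[ℤ] ℤ where
  toFun := GB h2
  map_add' := GB_add_right h2
  map_smul' c x := GB_smul_right c h2 x

lemma ker_pairingH2 : LinearMap.ker pairingH2 = Gamma := rfl

lemma pairingH2_surjective : Function.Surjective pairingH2 := fun n =>
  ⟨Pi.single 20 (-n), by simp [pairingH2, GB_h2_left]⟩

lemma pairingH2_h2 : pairingH2 h2 = -3 := by
  change GB h2 h2 = -3
  rw [GB_h2_left]
  decide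

/-- The submodule `ℤh² + Γ` has index `3` in `Γ̄`, i.e. the quotient
`Γ̄/(ℤh² + (h²)^⊥)` is (cyclic) of order `3`. -/
theorem stmt_15 :
    ((Submodule.span ℤ ({h2} : Set (Fin 23 → ℤ)) ⊔ Gamma).toAddSubgroup).index = 3 := by
  rw [← ker_pairingH2, Submodule.index_span_singleton_sup_ker pairingH2_surjective, pairingH2_h2]
  rfl
end

section
/- The orthogonal complement A₂^⊥ := {x ∈ Λ̃ : (x.λ₁) = (x.λ₂) = 0} equals the direct sum of the two E8(−1)-summands, U₁, U₂, and ℤμ₁ + ℤμ₂; in particular, A₂^⊥ is ℤ-linearly isometric to the lattice with block-diagonal Gram matrix E8(−1) ⊕ E8(−1) ⊕ U ⊕ U ⊕ A₂(−1), where A₂(−1) is ℤ² with Gram matrix [[−2,1],[1,−2]]. -/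
open scoped BigOperators

noncomputable section

/-- The Gram matrix of the Mukai lattice `Λ̃ = E₈(-1)² ⊕ U₁ ⊕ U₂ ⊕ U₃ ⊕ U₄` on `ℤ²⁴`,
where the last hyperbolic summand `U₄` carries the sign-changed pairing `(e₄.f₄) = -1`. -/
def gramM : Fin 24 → Fin 24 → ℤ := fun i j =>
  if i.val < 8 ∧ j.val < 8 then
    E8M ⟨i.val % 8, Nat.mod_lt _ (by norm_num)⟩ ⟨j.val % 8, Nat.mod_lt _ (by norm_num)⟩
  else if 8 ≤ i.val ∧ i.val < 16 ∧ 8 ≤ j.val ∧ j.val < 16 then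
    E8M ⟨(i.val - 8) % 8, Nat.mod_lt _ (by norm_num)⟩ ⟨(j.val - 8) % 8, Nat.mod_lt _ (by norm_num)⟩
  else if (i.val = 16 ∧ j.val = 17) ∨ (i.val = 17 ∧ j.val = 16) ∨
      (i.val = 18 ∧ j.val = 19) ∨ (i.val = 19 ∧ j.val = 18) ∨
      (i.val = 20 ∧ j.val = 21) ∨ (i.val = 21 ∧ j.val = 20) then 1
  else if (i.val = 22 ∧ j.val = 23) ∨ (i.val = 23 ∧ j.val = 22) then -1
  else 0

/-- The bilinear (Mukai) form of the lattice `Λ̃`. -/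
def MB (x y : Fin 24 → ℤ) : ℤ := ∑ i, ∑ j, gramM i j * x i * y j

/-- `λ₁ = e₄ - f₄`. -/
def l1 : Fin 24 → ℤ := Pi.single 22 1 - Pi.single 23 1

/-- `λ₂ = e₃ + f₃ + f₄`. -/
def l2 : Fin 24 → ℤ := Pi.single 20 1 + Pi.single 21 1 + Pi.single 23 1

/-- `μ₁ = e₃ - f₃`. -/
def m1 : Fin 24 → ℤ := Pi.single 20 1 - Pi.single 21 1

/-- `μ₂ = -e₃ - e₄ - f₄`. -/
def m2 : Fin 24 → ℤ := -(Pi.single 20 1) - Pi.single 22 1 - Pi.single 23 1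

lemma MB_add_left (x y z : Fin 24 → ℤ) : MB (x + y) z = MB x z + MB y z := by
  simp only [MB, Pi.add_apply, ← Finset.sum_add_distrib]
  refine Finset.sum_congr rfl fun i _ => Finset.sum_congr rfl fun j _ => ?_
  ring

lemma MB_smul_left (c : ℤ) (x y : Fin 24 → ℤ) : MB (c • x) y = c * MB x y := by
  simp only [MB, Finset.mul_sum]
  refine Finset.sum_congr rfl fun i _ => Finset.sum_congr rfl fun j _ => ?_
  simp only [Pi.smul_apply, smul_eq_mul]; ring

/-- Isometries of the Mukai lattice `Λ̃`. -/
def IsIsomM (g : (Fin 24 → ℤ) ≃ₗ[ℤ] (Fin 24 → ℤ)) : Prop := ∀ x y, MB (g x) (g y) = MB x y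

end
lemma MB_zero_left (y : Fin 24 → ℤ) : MB 0 y = 0 := by simp [MB]

/-- `A₂^⊥ = {x ∈ Λ̃ : (x.λ₁) = (x.λ₂) = 0}` as a submodule of `Λ̃`. -/
def A2perp : Submodule ℤ (Fin 24 → ℤ) where
  carrier := {x | MB x l1 = 0 ∧ MB x l2 = 0}
  add_mem' := by
    rintro a b ⟨ha1, ha2⟩ ⟨hb1, hb2⟩
    constructor <;> rw [MB_add_left] <;> omega
  zero_mem' := ⟨MB_zero_left _, MB_zero_left _⟩
  smul_mem' := by
    rintro c x ⟨h1, h2⟩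
    exact ⟨by rw [MB_smul_left, h1, mul_zero], by rw [MB_smul_left, h2, mul_zero]⟩
/-- The Gram matrix of the lattice `E₈(-1)² ⊕ U² ⊕ A₂(-1)` on `ℤ²²`. -/
def gramA : Fin 22 → Fin 22 → ℤ := fun i j =>
  if i.val < 8 ∧ j.val < 8 then
    E8M ⟨i.val % 8, Nat.mod_lt _ (by norm_num)⟩ ⟨j.val % 8, Nat.mod_lt _ (by norm_num)⟩
  else if 8 ≤ i.val ∧ i.val < 16 ∧ 8 ≤ j.val ∧ j.val < 16 then
    E8M ⟨(i.val - 8) % 8, Nat.mod_lt _ (by norm_num)⟩ ⟨(j.val - 8) % 8, Nat.mod_lt _ (by norm_num)⟩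
  else if (i.val = 16 ∧ j.val = 17) ∨ (i.val = 17 ∧ j.val = 16) ∨
      (i.val = 18 ∧ j.val = 19) ∨ (i.val = 19 ∧ j.val = 18) then 1
  else if (i.val = 20 ∧ j.val = 20) ∨ (i.val = 21 ∧ j.val = 21) then -2
  else if (i.val = 20 ∧ j.val = 21) ∨ (i.val = 21 ∧ j.val = 20) then 1
  else 0

/-- The bilinear form of the lattice `E₈(-1)² ⊕ U² ⊕ A₂(-1)`. -/
def AB (x y : Fin 22 → ℤ) : ℤ := ∑ i, ∑ j, gramA i j * x i * y j

/-!
Both Gram matrices are block diagonal and share the `E₈(-1)² ⊕ U²` block on the first twenty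
coordinates, so everything happens on the last coordinates. There `(x.λ₁) = x₂₂ - x₂₃` and
`(x.λ₂) = x₂₀ + x₂₁ - x₂₂`, so `x ∈ A₂^⊥` is determined by its first twenty coordinates together
with `a = -x₂₁`, `b = -x₂₂`, namely `x = w + a μ₁ + b μ₂`; and the pairing of two such tails is
`-2ac + ad + bc - 2bd`, the `A₂(-1)` form in the coordinates `(a, b)`.
-/

open Fin

theorem Fin.sum_sum_add_of_offDiag_eq_zero {R : Type*} [CommSemiring R] {m n : ℕ}
    (G : Fin (m + n) → Fin (m + n) → R)
    (h₁ : ∀ i j, G (castAdd n i) (natAdd m j) = 0) (h₂ : ∀ i j, G (natAdd m i) (castAdd n j) = 0)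
    (x y : Fin (m + n) → R) :
    ∑ i, ∑ j, G i j * x i * y j =
      ∑ i : Fin m, ∑ j : Fin m, G (castAdd n i) (castAdd n j) * x (castAdd n i) * y (castAdd n j) +
      ∑ i : Fin n, ∑ j : Fin n, G (natAdd m i) (natAdd m j) * x (natAdd m i) * y (natAdd m j) := by
  simp only [Fin.sum_univ_add, h₁, h₂, zero_mul, Finset.sum_const_zero, add_zero, zero_add]

def formE8E8UU (p q : Fin 20 → ℤ) : ℤ :=
  ∑ i, ∑ j, gramM (castAdd 4 i) (castAdd 4 j) * p i * q j

lemma MB_eq_formE8E8UU_add (x y : Fin 24 → ℤ) :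
    MB x y = formE8E8UU (fun i => x (castAdd 4 i)) (fun j => y (castAdd 4 j)) +
      (x 20 * y 21 + x 21 * y 20 - x 22 * y 23 - x 23 * y 22) := by
  rw [MB, Fin.sum_sum_add_of_offDiag_eq_zero (m := 20) (n := 4) gramM (by decide) (by decide)]
  congr 1
  simp [Fin.sum_univ_four, gramM, sub_eq_add_neg]

lemma gramA_castAdd (i j : Fin 20) :
    gramA (castAdd 2 i) (castAdd 2 j) = gramM (castAdd 4 i) (castAdd 4 j) := by
  revert i j
  decide

lemma AB_eq_formE8E8UU_add (v w : Fin 22 → ℤ) :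
    AB v w = formE8E8UU (fun i => v (castAdd 2 i)) (fun j => w (castAdd 2 j)) +
      (-2 * v 20 * w 20 + v 20 * w 21 + v 21 * w 20 - 2 * v 21 * w 21) := by
  rw [AB, Fin.sum_sum_add_of_offDiag_eq_zero (m := 20) (n := 2) gramA (by decide) (by decide)]
  simp only [gramA_castAdd]
  congr 1
  simp [Fin.sum_univ_two, gramA, sub_eq_add_neg, add_assoc]

lemma MB_eq_of_castAdd_eq_zero (x y : Fin 24 → ℤ) (hy : ∀ j : Fin 20, y (castAdd 4 j) = 0) :
    MB x y = x 20 * y 21 + x 21 * y 20 - x 22 * y 23 - x 23 * y 22 := by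
  simp [MB_eq_formE8E8UU_add, formE8E8UU, hy]

lemma MB_l1 (x : Fin 24 → ℤ) : MB x l1 = x 22 - x 23 := by
  rw [MB_eq_of_castAdd_eq_zero x l1 (by decide)]
  simp [l1]

lemma MB_l2 (x : Fin 24 → ℤ) : MB x l2 = x 20 + x 21 - x 22 := by
  rw [MB_eq_of_castAdd_eq_zero x l2 (by decide)]
  simp [l2, sub_eq_add_neg]

lemma mem_A2perp_iff {x : Fin 24 → ℤ} : x ∈ A2perp ↔ x 22 = x 23 ∧ x 20 + x 21 = x 22 := by
  change MB x l1 = 0 ∧ MB x l2 = 0 ↔ _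
  rw [MB_l1, MB_l2, sub_eq_zero, sub_eq_zero]

lemma fin24_eq_of_twenty_le : ∀ i : Fin 24, 20 ≤ i.val → i = 20 ∨ i = 21 ∨ i = 22 ∨ i = 23 := by
  decide

lemma coe_A2perp :
    (A2perp : Set (Fin 24 → ℤ)) =
      {z | ∃ (w : Fin 24 → ℤ) (a b : ℤ), (∀ i : Fin 24, 20 ≤ i.val → w i = 0) ∧
        z = w + a • m1 + b • m2} := by
  ext z
  simp only [SetLike.mem_coe, Set.mem_ofPred_eq, mem_A2perp_iff]
  constructor
  · rintro ⟨h₁, h₂⟩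
    refine ⟨z - (-z 21) • m1 - (-z 22) • m2, -z 21, -z 22, fun i hi => ?_, by abel⟩
    rcases fin24_eq_of_twenty_le i hi with rfl | rfl | rfl | rfl <;> simp [m1, m2] <;> linarith
  · rintro ⟨w, a, b, hw, rfl⟩
    simp [m1, m2, hw 20 (by decide), hw 21 (by decide), hw 22 (by decide), hw 23 (by decide)]

def toA2Coords : (Fin 24 → ℤ) →ₗ[ℤ] (Fin 22 → ℤ) where
  toFun x := Fin.append (fun i => x (castAdd 4 i)) ![-x 21, -x 22]
  map_add' x y := by
    ext i
    refine Fin.addCases (fun j => ?_) (fun k => ?_) i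
    · simp
    · simp only [Fin.append_right, Pi.add_apply]
      fin_cases k <;> simp [add_comm]
  map_smul' c x := by
    ext i
    refine Fin.addCases (fun j => ?_) (fun k => ?_) i
    · simp
    · simp only [Fin.append_right, Pi.smul_apply]
      fin_cases k <;> simp

section toA2Coords

variable (x : Fin 24 → ℤ)

@[simp] lemma toA2Coords_castAdd (i : Fin 20) : toA2Coords x (castAdd 2 i) = x (castAdd 4 i) :=
  Fin.append_left (fun j => x (castAdd 4 j)) ![-x 21, -x 22] i

@[simp] lemma toA2Coords_20 : toA2Coords x 20 = -x 21 := rfl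

@[simp] lemma toA2Coords_21 : toA2Coords x 21 = -x 22 := rfl

end toA2Coords

def ofA2Coords (v : Fin 22 → ℤ) : Fin 24 → ℤ :=
  Fin.append (fun i => v (castAdd 2 i)) ![v 20 - v 21, -v 20, -v 21, -v 21]

section ofA2Coords

variable (v : Fin 22 → ℤ)

@[simp] lemma ofA2Coords_castAdd (i : Fin 20) : ofA2Coords v (castAdd 4 i) = v (castAdd 2 i) :=
  Fin.append_left _ _ i

@[simp] lemma ofA2Coords_20 : ofA2Coords v 20 = v 20 - v 21 := rfl

@[simp] lemma ofA2Coords_21 : ofA2Coords v 21 = -v 20 := rfl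

@[simp] lemma ofA2Coords_22 : ofA2Coords v 22 = -v 21 := rfl

@[simp] lemma ofA2Coords_23 : ofA2Coords v 23 = -v 21 := rfl

lemma ofA2Coords_mem : ofA2Coords v ∈ A2perp :=
  mem_A2perp_iff.2 ⟨rfl, show v 20 - v 21 + -v 20 = -v 21 by ring⟩

lemma toA2Coords_ofA2Coords : toA2Coords (ofA2Coords v) = v := by
  ext i
  refine Fin.addCases (m := 20) (n := 2) (fun j => ?_) (fun k => ?_) i
  · simp
  · fin_cases k <;> simp

end ofA2Coords

lemma ofA2Coords_toA2Coords {x : Fin 24 → ℤ} (hx : x ∈ A2perp) :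
    ofA2Coords (toA2Coords x) = x := by
  obtain ⟨h₁, h₂⟩ := mem_A2perp_iff.1 hx
  ext i
  refine Fin.addCases (m := 20) (n := 4) (fun j => ?_) (fun k => ?_) i
  · simp
  · fin_cases k <;> simp <;> linarith

lemma AB_toA2Coords {x y : Fin 24 → ℤ} (hx : x ∈ A2perp) (hy : y ∈ A2perp) :
    AB (toA2Coords x) (toA2Coords y) = MB x y := by
  obtain ⟨hx₁, hx₂⟩ := mem_A2perp_iff.1 hx
  obtain ⟨hy₁, hy₂⟩ := mem_A2perp_iff.1 hy
  rw [AB_eq_formE8E8UU_add, MB_eq_formE8E8UU_add]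
  simp only [toA2Coords_castAdd, toA2Coords_20, toA2Coords_21]
  rw [← hx₁, ← hy₁, ← hx₂, ← hy₂]
  ring

def A2perpEquiv : A2perp ≃ₗ[ℤ] (Fin 22 → ℤ) where
  __ := toA2Coords.domRestrict A2perp
  invFun v := ⟨ofA2Coords v, ofA2Coords_mem v⟩
  left_inv x := Subtype.ext (ofA2Coords_toA2Coords x.2)
  right_inv := toA2Coords_ofA2Coords

/-- `A₂^⊥ ⊂ Λ̃` equals the direct sum of the two `E₈(-1)`-summands, `U₁`, `U₂`
and `ℤμ₁ + ℤμ₂`; in particular it is isometric to `E₈(-1)² ⊕ U² ⊕ A₂(-1)`. -/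
theorem stmt_16 :
    ((A2perp : Set (Fin 24 → ℤ)) =
      {z | ∃ (w : Fin 24 → ℤ) (a b : ℤ), (∀ i : Fin 24, 20 ≤ i.val → w i = 0) ∧
        z = w + a • m1 + b • m2}) ∧
    ∃ g : A2perp ≃ₗ[ℤ] (Fin 22 → ℤ), ∀ a b : A2perp,
      AB (g a) (g b) = MB (a : Fin 24 → ℤ) (b : Fin 24 → ℤ) :=
  ⟨coe_A2perp, A2perpEquiv, fun a b => AB_toA2Coords a.2 b.2⟩
end

section
/- The submodule ℤλ₁ + ℤλ₂ + A₂^⊥ of Λ̃, where A₂^⊥ := {x ∈ Λ̃ : (x.λ₁) = (x.λ₂) = 0}, has index 3 in Λ̃, and the quotient group Λ̃/(ℤλ₁ + ℤλ₂ + A₂^⊥) is cyclic of order 3 generated by the class of e₃ + f₄. -/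
/-!
The pairings with `λ₁` and `λ₂` map `Λ̃` to `ℤ²`, and on `ℤλ₁ + ℤλ₂` this map is the Gram matrix
`[[2, -1], [-1, 2]]` of `A₂`. Hence `z ∈ ℤλ₁ + ℤλ₂ + A₂^⊥` exactly when `((z.λ₁), (z.λ₂))` lies in
the image of that matrix, i.e. when `3 ∣ (z.λ₁) + 2 (z.λ₂)`. For `z = e₃ + f₄` this number is `1`,
so `z ↦ (z.λ₁) + 2 (z.λ₂) mod 3` is a surjection `Λ̃ → ℤ/3` with kernel `ℤλ₁ + ℤλ₂ + A₂^⊥`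
sending `e₃ + f₄` to a generator.
-/

open scoped BigOperators

section A2Sublattice

open Submodule LinearMap

variable {M : Type*} [AddCommGroup M] {f₁ f₂ : M →ₗ[ℤ] ℤ} {v₁ v₂ : M}

theorem mem_span_pair_sup_ker_inf_ker_iff (h₁₁ : f₁ v₁ = 2) (h₁₂ : f₁ v₂ = -1)
    (h₂₁ : f₂ v₁ = -1) (h₂₂ : f₂ v₂ = 2) (z : M) :
    z ∈ span ℤ {v₁, v₂} ⊔ (ker f₁ ⊓ ker f₂) ↔ (3 : ℤ) ∣ f₁ z + 2 * f₂ z := by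
  constructor
  · intro hz
    obtain ⟨_, hu, w, hw, rfl⟩ := mem_sup.mp hz
    obtain ⟨a, b, rfl⟩ := mem_span_pair.mp hu
    obtain ⟨hw₁, hw₂⟩ : f₁ w = 0 ∧ f₂ w = 0 := hw
    refine ⟨b, ?_⟩
    simp only [map_add, map_smul, smul_eq_mul, h₁₁, h₁₂, h₂₁, h₂₂, hw₁, hw₂]
    ring
  · rintro ⟨c, hc⟩
    -- `(a, b) = (2c - f₂ z, c)` solves `G (a, b) = (f₁ z, f₂ z)`, `G` the Gram matrix of `v₁, v₂`
    have hu : (2 * c - f₂ z) • v₁ + c • v₂ ∈ span ℤ {v₁, v₂} := mem_span_pair.mpr ⟨_, _, rfl⟩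
    refine mem_sup.mpr ⟨_, hu, _, ⟨?_, ?_⟩, add_sub_cancel _ z⟩ <;>
    · simp only [SetLike.mem_coe, mem_ker, map_sub, map_add, map_smul, smul_eq_mul,
        h₁₁, h₁₂, h₂₁, h₂₂]
      linarith

end A2Sublattice

theorem AddSubgroup.index_eq_of_mem_iff_dvd {G : Type*} [AddCommGroup G] (φ : G →+ ℤ) {g : G}
    (hg : φ g = 1) (n : ℕ) {H : AddSubgroup G} (hH : ∀ z, z ∈ H ↔ (n : ℤ) ∣ φ z) :
    H.index = n := by
  have hker : H = ((Int.castAddHom (ZMod n)).comp φ).ker := by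
    ext z
    rw [hH, AddMonoidHom.mem_ker, AddMonoidHom.comp_apply, Int.coe_castAddHom,
      ZMod.intCast_zmod_eq_zero_iff_dvd]
  have hsurj : Function.Surjective ((Int.castAddHom (ZMod n)).comp φ) := by
    intro c
    obtain ⟨k, rfl⟩ := ZMod.intCast_surjective c
    exact ⟨k • g, by simp [hg]⟩
  rw [hker, AddSubgroup.index_ker, AddMonoidHom.range_eq_top.mpr hsurj, AddSubgroup.card_top,
    Nat.card_zmod]

def pairingWith (y : Fin 24 → ℤ) : (Fin 24 → ℤ) →ₗ[ℤ] ℤ where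
  toFun x := MB x y
  map_add' x x' := MB_add_left x x' y
  map_smul' c x := MB_smul_left c x y

lemma A2perp_eq_ker_inf_ker :
    A2perp = LinearMap.ker (pairingWith l1) ⊓ LinearMap.ker (pairingWith l2) := rfl

lemma MB_l1_l1 : MB l1 l1 = 2 := by decide
lemma MB_l1_l2 : MB l1 l2 = -1 := by decide
lemma MB_l2_l1 : MB l2 l1 = -1 := by decide
lemma MB_l2_l2 : MB l2 l2 = 2 := by decide
lemma MB_e₃_add_f₄_l1 : MB (Pi.single 20 1 + Pi.single 23 1) l1 = -1 := by decide
lemma MB_e₃_add_f₄_l2 : MB (Pi.single 20 1 + Pi.single 23 1) l2 = 1 := by decide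

lemma mem_span_l1_l2_sup_A2perp_iff (z : Fin 24 → ℤ) :
    z ∈ Submodule.span ℤ ({l1, l2} : Set (Fin 24 → ℤ)) ⊔ A2perp ↔
      (3 : ℤ) ∣ MB z l1 + 2 * MB z l2 := by
  rw [A2perp_eq_ker_inf_ker]
  exact mem_span_pair_sup_ker_inf_ker_iff MB_l1_l1 MB_l2_l1 MB_l1_l2 MB_l2_l2 z

/-- `ℤλ₁ + ℤλ₂ + A₂^⊥` has index `3` in `Λ̃`, with quotient cyclic of order `3`
generated by the class of `e₃ + f₄`. -/
theorem stmt_18 :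
    ((Submodule.span ℤ ({l1, l2} : Set (Fin 24 → ℤ)) ⊔ A2perp).toAddSubgroup.index = 3) ∧
    (Pi.single 20 1 + Pi.single 23 1 : Fin 24 → ℤ) ∉
      Submodule.span ℤ ({l1, l2} : Set (Fin 24 → ℤ)) ⊔ A2perp ∧
    ∀ z : Fin 24 → ℤ,
      z ∈ Submodule.span ℤ ({l1, l2} : Set (Fin 24 → ℤ)) ⊔ A2perp ∨
      z - (Pi.single 20 1 + Pi.single 23 1) ∈
        Submodule.span ℤ ({l1, l2} : Set (Fin 24 → ℤ)) ⊔ A2perp ∨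
      z - (2 : ℤ) • (Pi.single 20 1 + Pi.single 23 1) ∈
        Submodule.span ℤ ({l1, l2} : Set (Fin 24 → ℤ)) ⊔ A2perp := by
  set φ := pairingWith l1 + 2 • pairingWith l2
  have hN (z : Fin 24 → ℤ) :
      z ∈ Submodule.span ℤ ({l1, l2} : Set (Fin 24 → ℤ)) ⊔ A2perp ↔ (3 : ℤ) ∣ φ z :=
    mem_span_l1_l2_sup_A2perp_iff z
  have hg : φ (Pi.single 20 1 + Pi.single 23 1) = 1 := by
    change MB _ l1 + 2 * MB _ l2 = 1
    rw [MB_e₃_add_f₄_l1, MB_e₃_add_f₄_l2]; norm_num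
  refine ⟨AddSubgroup.index_eq_of_mem_iff_dvd φ.toAddMonoidHom hg 3 hN, ?_, fun z => ?_⟩
  · rw [hN, hg]; decide
  · simp only [hN, map_sub, map_smul, hg, smul_eq_mul]
    omega
end

section
/- Let d be a positive integer. If d ≡ 0 (mod 6), then the submodule ℤλ₁ + ℤλ₂ + ℤv_d is saturated in Λ̃, i.e. L_d = ℤλ₁ + ℤλ₂ + ℤv_d. If d ≡ 2 (mod 6), then ℤλ₁ + ℤλ₂ + ℤv_d has index 3 in L_d; in particular, (1/3)(v_d − λ₁ + λ₂) ∈ Λ̃. -/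
open scoped BigOperators

/-- The Noether–Lefschetz vector `v_d ∈ Λ̃`: for `d ≡ 0 (mod 6)` it is `e₁ - (d/6) f₁`, and
for `d ≡ 2 (mod 6)` it is `3(e₁ - ((d-2)/6) f₁) + μ₁ - μ₂`. -/
def vdM (d : ℤ) : Fin 24 → ℤ :=
  if d % 6 = 0 then Pi.single 16 1 - (d / 6) • Pi.single 17 1
  else (3 : ℤ) • (Pi.single 16 1 - ((d - 2) / 6) • Pi.single 17 1) + m1 - m2

/-- `L_d`, the saturation of `ℤλ₁ + ℤλ₂ + ℤv_d` in `Λ̃`. -/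
def LdSub (d : ℤ) : Submodule ℤ (Fin 24 → ℤ) :=
  sat (Submodule.span ℤ ({l1, l2, vdM d} : Set (Fin 24 → ℤ)))

/-!
Reading off the coordinates of `e₁`, `e₃`, `e₄` gives a projection of `Λ̃` onto
`ℤλ₁ + ℤλ₂ + ℤw` whenever `w` has `e₁`-coordinate `1` and `e₄`-coordinate `0`, so such spans are
saturated; for `d ≡ 0 (mod 6)` this applies to `w = v_d`. For `d ≡ 2 (mod 6)` one has
`v_d = 3u + λ₁ - λ₂` with `u = e₁ - ((d-2)/6) f₁ + e₃ + f₄`, so `ℤλ₁ + ℤλ₂ + ℤv_d = ℤλ₁ + ℤλ₂ + 3ℤu`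
has the same saturation as `ℤλ₁ + ℤλ₂ + ℤu`, which is saturated, and the `e₁`-coordinate
identifies the quotient with `ℤ/3`.
-/

lemma mem_sup_span_singleton {R M : Type*} [Semiring R] [AddCommMonoid M] [Module R M]
    {H : Submodule R M} {u x : M} : x ∈ H ⊔ R ∙ u ↔ ∃ h ∈ H, ∃ c : R, h + c • u = x := by
  simp only [Submodule.mem_sup, Submodule.mem_span_singleton, exists_exists_eq_and]

section Saturation

variable {R M : Type*} [CommRing R] [IsDomain R] [AddCommGroup M] [Module R M]

lemma le_sat (N : Submodule R M) : N ≤ sat N :=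
  fun x hx => ⟨1, one_ne_zero, by simpa using hx⟩

lemma sat_mono {N N' : Submodule R M} (h : N ≤ N') : sat N ≤ sat N' :=
  fun _ ⟨n, hn, hx⟩ => ⟨n, hn, h hx⟩

lemma sat_eq_sat_of_smul_le {N N' : Submodule R M} (hle : N ≤ N') {r : R} (hr : r ≠ 0)
    (hsmul : ∀ x ∈ N', r • x ∈ N) : sat N = sat N' := by
  refine le_antisymm (sat_mono hle) ?_
  rintro x ⟨n, hn, hx⟩
  exact ⟨r * n, mul_ne_zero hr hn, by simpa [mul_smul] using hsmul _ hx⟩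

lemma sat_eq_self_of_proj [Module.IsTorsionFree R M] {N : Submodule R M} (p : M →ₗ[R] M)
    (hp : ∀ x, p x ∈ N) (hpN : ∀ x ∈ N, p x = x) : sat N = N := by
  refine le_antisymm ?_ (le_sat N)
  rintro x ⟨n, hn, hx⟩
  have : n • p x = n • x := by rw [← map_smul, hpN _ hx]
  exact smul_right_injective M hn this ▸ hp x

lemma sat_sup_span_singleton_smul (H : Submodule R M) (u : M) {r : R} (hr : r ≠ 0) :
    sat (H ⊔ R ∙ (r • u)) = sat (H ⊔ R ∙ u) := by
  refine sat_eq_sat_of_smul_le (sup_le_sup_left (Submodule.span_singleton_smul_le R r u) H) hr ?_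
  intro x hx
  obtain ⟨h, hh, c, rfl⟩ := mem_sup_span_singleton.1 hx
  refine mem_sup_span_singleton.2 ⟨r • h, H.smul_mem r hh, c, ?_⟩
  rw [smul_add, smul_comm r c u]

end Saturation

lemma span_insert_insert_eq_sup {R M : Type*} [Semiring R] [AddCommMonoid M] [Module R M]
    (a b w : M) : Submodule.span R {a, b, w} = Submodule.span R {a, b} ⊔ R ∙ w := by
  rw [← Submodule.span_union, Set.insert_union, Set.singleton_union]

lemma sup_span_singleton_add_mem {R M : Type*} [Ring R] [AddCommGroup M] [Module R M]
    {H : Submodule R M} {h : M} (hh : h ∈ H) (w : M) : H ⊔ R ∙ (w + h) = H ⊔ R ∙ w := by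
  have key : ∀ w' h', h' ∈ H → H ⊔ R ∙ (w' + h') ≤ H ⊔ R ∙ w' := fun w' h' hh' =>
    sup_le le_sup_left <| (Submodule.span_singleton_le_iff_mem _ _).2 <|
      add_mem (Submodule.mem_sup_right (Submodule.mem_span_singleton_self w'))
        (Submodule.mem_sup_left hh')
  refine le_antisymm (key w h hh) ?_
  simpa using key (w + h) (-h) (neg_mem hh)

/-- A functional `φ` killing `H` with `φ u = 1` identifies `(H + ℤu) / (H + ℤnu)` with `ℤ/n`. -/
lemma relIndex_sup_span_natCast_smul {M : Type*} [AddCommGroup M] {H : Submodule ℤ M}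
    (φ : M →ₗ[ℤ] ℤ) (hφH : H ≤ LinearMap.ker φ) {u : M} (hφu : φ u = 1) (n : ℕ) :
    (H ⊔ ℤ ∙ ((n : ℤ) • u)).toAddSubgroup.relIndex (H ⊔ ℤ ∙ u).toAddSubgroup = n := by
  set K := (H ⊔ ℤ ∙ u).toAddSubgroup
  have hφ : ∀ h ∈ H, ∀ c : ℤ, φ (h + c • u) = c := fun h hh c => by
    simp [LinearMap.mem_ker.1 (hφH hh), hφu]
  let f : K →+ ZMod n := (Int.castAddHom (ZMod n)).comp (φ.toAddMonoidHom.comp K.subtype)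
  have hker : f.ker = (H ⊔ ℤ ∙ ((n : ℤ) • u)).toAddSubgroup.addSubgroupOf K := by
    ext ⟨x, hx⟩
    obtain ⟨h, hh, c, rfl⟩ := mem_sup_span_singleton.1 hx
    simp only [AddMonoidHom.mem_ker, AddSubgroup.mem_addSubgroupOf, Submodule.mem_toAddSubgroup,
      mem_sup_span_singleton, f, AddMonoidHom.coe_comp, Function.comp_apply,
      AddSubgroup.coe_subtype, LinearMap.toAddMonoidHom_coe, Int.coe_castAddHom, hφ h hh,
      ZMod.intCast_zmod_eq_zero_iff_dvd]
    constructor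
    · rintro ⟨c', rfl⟩
      exact ⟨h, hh, c', by rw [smul_smul, mul_comm]⟩
    · rintro ⟨h', hh', c', hx'⟩
      have := congrArg φ hx'.symm
      exact ⟨c', by simpa [hφ h hh, LinearMap.mem_ker.1 (hφH hh'), hφu, mul_comm] using this⟩
  have hsurj : Function.Surjective f := fun y => by
    obtain ⟨m, rfl⟩ := ZMod.intCast_surjective y
    refine ⟨⟨m • u, Submodule.mem_sup_right (Submodule.smul_mem _ m
      (Submodule.mem_span_singleton_self u))⟩, ?_⟩
    simp [f, hφu]
  rw [AddSubgroup.relIndex, ← hker, AddSubgroup.index_ker, AddMonoidHom.range_eq_top.2 hsurj,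
    Nat.card_congr AddSubgroup.topEquiv.toEquiv, Nat.card_zmod]

/-- Coordinates `16`, `20`, `22` of `ℤ²⁴` are those of `e₁`, `e₃`, `e₄`. -/
def coordProj (w : Fin 24 → ℤ) : (Fin 24 → ℤ) →ₗ[ℤ] (Fin 24 → ℤ) :=
  LinearMap.smulRight (LinearMap.proj 22) l1 +
    LinearMap.smulRight (LinearMap.proj 20 - w 20 • LinearMap.proj 16) l2 +
    LinearMap.smulRight (LinearMap.proj 16) w

lemma sat_span_eq_self {w : Fin 24 → ℤ} (h16 : w 16 = 1) (h22 : w 22 = 0) :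
    sat (Submodule.span ℤ {l1, l2, w}) = Submodule.span ℤ {l1, l2, w} := by
  refine sat_eq_self_of_proj (coordProj w) (fun x => ?_) (fun x hx => ?_)
  · simp only [coordProj, LinearMap.add_apply, LinearMap.smulRight_apply]
    refine add_mem (add_mem ?_ ?_) ?_ <;>
      exact Submodule.smul_mem _ _ (Submodule.subset_span (by simp))
  · refine LinearMap.eqOn_span (g := LinearMap.id) ?_ hx
    rintro _ (rfl | rfl | rfl) <;> simp [coordProj, l1, l2, h16, h22]

/-- The vector `(v_d - λ₁ + λ₂) / 3` for `d ≡ 2 (mod 6)`. -/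
def ud (d : ℤ) : Fin 24 → ℤ :=
  Pi.single 16 1 - ((d - 2) / 6) • Pi.single 17 1 + Pi.single 20 1 + Pi.single 23 1

lemma vdM_of_emod_six_eq_two {d : ℤ} (h : d % 6 = 2) : vdM d = (3 : ℤ) • ud d + (l1 - l2) := by
  funext i
  fin_cases i <;> simp [vdM, h, ud, l1, l2, m1, m2]

theorem stmt_19_general (d : ℤ) :
    (d % 6 = 0 →
      LdSub d = Submodule.span ℤ ({l1, l2, vdM d} : Set (Fin 24 → ℤ))) ∧
    (d % 6 = 2 →
      ((Submodule.span ℤ ({l1, l2, vdM d} : Set (Fin 24 → ℤ))).toAddSubgroup.relIndex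
        (LdSub d).toAddSubgroup = 3) ∧
      ∃ u : Fin 24 → ℤ, (3 : ℤ) • u = vdM d - l1 + l2) := by
  refine ⟨fun h0 => sat_span_eq_self (by simp [vdM, h0]) (by simp [vdM, h0]), fun h2 => ?_⟩
  set H := Submodule.span ℤ ({l1, l2} : Set (Fin 24 → ℤ))
  have hspan : Submodule.span ℤ {l1, l2, vdM d} = H ⊔ ℤ ∙ (((3 : ℕ) : ℤ) • ud d) := by
    rw [span_insert_insert_eq_sup, vdM_of_emod_six_eq_two h2, sup_span_singleton_add_mem
      (sub_mem (Submodule.subset_span (by simp)) (Submodule.subset_span (by simp)))]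
    rfl
  have hLd : LdSub d = H ⊔ ℤ ∙ ud d := by
    rw [LdSub, hspan, sat_sup_span_singleton_smul H (ud d) (by norm_num),
      ← span_insert_insert_eq_sup, sat_span_eq_self (by simp [ud]) (by simp [ud])]
  refine ⟨?_, ud d, by rw [vdM_of_emod_six_eq_two h2]; abel⟩
  rw [hspan, hLd]
  refine relIndex_sup_span_natCast_smul (LinearMap.proj 16) ?_ (by simp [ud]) 3
  rw [Submodule.span_le]
  rintro _ (rfl | rfl) <;> simp [l1, l2]

/-- For a positive integer `d`: if `d ≡ 0 (mod 6)` then `ℤλ₁ + ℤλ₂ + ℤv_d` is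
saturated in `Λ̃`, i.e. equals `L_d`; if `d ≡ 2 (mod 6)` then it has index `3` in `L_d`, and
in particular `(1/3)(v_d - λ₁ + λ₂) ∈ Λ̃`. -/
theorem stmt_19 (d : ℤ) (hd : 0 < d) :
    (d % 6 = 0 →
      LdSub d = Submodule.span ℤ ({l1, l2, vdM d} : Set (Fin 24 → ℤ))) ∧
    (d % 6 = 2 →
      ((Submodule.span ℤ ({l1, l2, vdM d} : Set (Fin 24 → ℤ))).toAddSubgroup.relIndex
        (LdSub d).toAddSubgroup = 3) ∧
      ∃ u : Fin 24 → ℤ, (3 : ℤ) • u = vdM d - l1 + l2) :=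
  stmt_19_general d
end
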